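/- arXiv:1705.09180 — 7 statements merged into one kernel-verified Lean document; each statement's English description precedes it below -/
import Mathlib

section
/- For every permutation σ of {1,…,n}, the TSP tour length through the midpoints is at most the labeled split-tour length: T(σ) ≤ L(σ). -/
/-- The start position of the split pair: `pᵢ` shifted left by `ε/2` along the x-axis
(the plane is modeled by `ℂ`). -/
noncomputable def startPt (q : ℂ) (ε : ℝ) : ℂ := q - (ε : ℂ) / 2

/-- The goal position of the split pair: `pᵢ` shifted right by `ε/2` along the x-axis. -/
noncomputable def goalPt (q : ℂ) (ε : ℝ) : ℂ := q + (ε : ℂ) / 2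

/-- The TSP tour length `T(σ)` through `p₀, p_{σ(1)}, …, p_{σ(n)}, p₀`.
Points `p₁, …, pₙ` are `p i.succ` for `i : Fin n`. -/
noncomputable def tourT (n : ℕ) (hn : 0 < n) (p : Fin (n + 1) → ℂ)
    (σ : Equiv.Perm (Fin n)) : ℝ :=
  dist (p 0) (p (σ ⟨0, hn⟩).succ)
    + ∑ i : Fin (n - 1),
        dist (p (σ ⟨i.1, by have := i.2; omega⟩).succ)
             (p (σ ⟨i.1 + 1, by have := i.2; omega⟩).succ)
    + dist (p (σ ⟨n - 1, by omega⟩).succ) (p 0)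

/-- The labeled split-tour length `L(σ)`:
`dist(p₀,s_{σ(1)}) + Σᵢ dist(s_{σ(i)},g_{σ(i)}) + Σᵢ dist(g_{σ(i)},s_{σ(i+1)}) + dist(g_{σ(n)},p₀)`. -/
noncomputable def tourL (n : ℕ) (hn : 0 < n) (p : Fin (n + 1) → ℂ) (ε : ℝ)
    (σ : Equiv.Perm (Fin n)) : ℝ :=
  dist (p 0) (startPt (p (σ ⟨0, hn⟩).succ) ε)
    + ∑ i : Fin n, dist (startPt (p (σ i).succ) ε) (goalPt (p (σ i).succ) ε)
    + ∑ i : Fin (n - 1),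
        dist (goalPt (p (σ ⟨i.1, by have := i.2; omega⟩).succ) ε)
             (startPt (p (σ ⟨i.1 + 1, by have := i.2; omega⟩).succ) ε)
    + dist (goalPt (p (σ ⟨n - 1, by omega⟩).succ) ε) (p 0)

lemma d_qs (q : ℂ) (ε : ℝ) (hε : 0 ≤ ε) : dist q (startPt q ε) = ε / 2 := by
  simp [startPt, Complex.dist_eq, abs_of_nonneg hε]

lemma d_qg (q : ℂ) (ε : ℝ) (hε : 0 ≤ ε) : dist q (goalPt q ε) = ε / 2 := by
  simp [goalPt, Complex.dist_eq, abs_of_nonneg hε]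

lemma d_sg (q : ℂ) (ε : ℝ) (hε : 0 ≤ ε) : dist (startPt q ε) (goalPt q ε) = ε := by
  have : startPt q ε - goalPt q ε = ((-ε : ℝ) : ℂ) := by
    simp [startPt, goalPt]; ring
  rw [Complex.dist_eq, this]
  simp [abs_of_nonneg hε]

lemma bound1 (a b : ℂ) (ε : ℝ) (hε : 0 ≤ ε) :
    dist a b ≤ dist a (startPt b ε) + ε / 2 := by
  calc dist a b ≤ dist a (startPt b ε) + dist (startPt b ε) b := dist_triangle _ _ _
    _ = dist a (startPt b ε) + ε / 2 := by rw [dist_comm (startPt b ε) b, d_qs _ _ hε]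

lemma bound2 (a b : ℂ) (ε : ℝ) (hε : 0 ≤ ε) :
    dist a b ≤ ε / 2 + dist (goalPt a ε) (startPt b ε) + ε / 2 := by
  calc dist a b ≤ dist a (goalPt a ε) + dist (goalPt a ε) (startPt b ε)
        + dist (startPt b ε) b := dist_triangle4 _ _ _ _
    _ = _ := by rw [d_qg _ _ hε, dist_comm (startPt b ε) b, d_qs _ _ hε]

lemma bound3 (a b : ℂ) (ε : ℝ) (hε : 0 ≤ ε) :
    dist a b ≤ ε / 2 + dist (goalPt a ε) b := by
  calc dist a b ≤ dist a (goalPt a ε) + dist (goalPt a ε) b := dist_triangle _ _ _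
    _ = _ := by rw [d_qg _ _ hε]

/-- For every permutation `σ` of `{1,…,n}`, the TSP tour length through the midpoints is
at most the labeled split-tour length: `T(σ) ≤ L(σ)`. -/
theorem stmt_0 (n : ℕ) (hn : 0 < n) (p : Fin (n + 1) → ℂ) (ε : ℝ) (hε : 0 < ε)
    (σ : Equiv.Perm (Fin n)) :
    tourT n hn p σ ≤ tourL n hn p ε σ := by
  have hε' := hε.le
  have step : tourT n hn p σ ≤
      (dist (p 0) (startPt (p (σ ⟨0, hn⟩).succ) ε) + ε / 2)
      + ∑ i : Fin (n - 1),
          (ε / 2 + dist (goalPt (p (σ ⟨i.1, by have := i.2; omega⟩).succ) ε)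
              (startPt (p (σ ⟨i.1 + 1, by have := i.2; omega⟩).succ) ε) + ε / 2)
      + (ε / 2 + dist (goalPt (p (σ ⟨n - 1, by omega⟩).succ) ε) (p 0)) := by
    unfold tourT
    refine add_le_add (add_le_add (bound1 _ _ _ hε') (Finset.sum_le_sum fun i _ => ?_))
      (bound3 _ _ _ hε')
    exact bound2 _ _ _ hε'
  refine step.trans ?_
  unfold tourL
  simp only [d_sg _ _ hε', Finset.sum_add_distrib, Finset.sum_const, Finset.card_univ,
    Fintype.card_fin, nsmul_eq_mul]
  have hcast : ((n - 1 : ℕ) : ℝ) = (n : ℝ) - 1 := by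
    rw [Nat.cast_sub hn]; simp
  rw [hcast]
  have hn1 : (1 : ℝ) ≤ (n : ℝ) := by exact_mod_cast hn
  nlinarith [dist_nonneg (x := p 0) (y := startPt (p (σ ⟨0, hn⟩).succ) ε)]
end

section
/- For every permutation σ of {1,…,n}, the labeled split-tour length exceeds the TSP tour length by at most 2nε: L(σ) ≤ T(σ) + 2nε. -/
/-- For every permutation σ of {1,…,n}, the labeled split-tour length exceeds the TSP tour
length by at most 2nε: L(σ) ≤ T(σ) + 2nε. -/
theorem stmt_1 (n : ℕ) (hn : 0 < n) (p : Fin (n + 1) → ℂ) (ε : ℝ) (hε : 0 < ε)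
    (σ : Equiv.Perm (Fin n)) :
    tourL n hn p ε σ ≤ tourT n hn p σ + 2 * n * ε := by
  have hsg : ∀ q : ℂ, dist (startPt q ε) (goalPt q ε) = ε := by
    intro q
    simp only [startPt, goalPt, Complex.dist_eq]
    have : q - (ε : ℂ) / 2 - (q + (ε : ℂ) / 2) = -(ε : ℂ) := by ring
    rw [this]
    simp [abs_of_pos hε]
  have h1 : ∀ a q : ℂ, dist a (startPt q ε) ≤ dist a q + ε / 2 := by
    intro a q
    calc dist a (startPt q ε) ≤ dist a q + dist q (startPt q ε) := dist_triangle _ _ _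
    _ ≤ dist a q + ε / 2 := by
        simp only [startPt, Complex.dist_eq]
        have : q - (q - (ε : ℂ) / 2) = (ε : ℂ) / 2 := by ring
        rw [this]
        simp [abs_of_pos hε, abs_of_nonneg hε.le]
  have h2 : ∀ q a : ℂ, dist (goalPt q ε) a ≤ dist q a + ε / 2 := by
    intro q a
    calc dist (goalPt q ε) a ≤ dist (goalPt q ε) q + dist q a := dist_triangle _ _ _
    _ ≤ ε / 2 + dist q a := by
        simp only [goalPt, Complex.dist_eq]
        have : q + (ε : ℂ) / 2 - q = (ε : ℂ) / 2 := by ring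
        rw [this]
        simp [abs_of_nonneg hε.le]
    _ = dist q a + ε / 2 := by ring
  have h3 : ∀ a b : ℂ, dist (goalPt a ε) (startPt b ε) ≤ dist a b + ε := by
    intro a b
    calc dist (goalPt a ε) (startPt b ε)
        ≤ dist (goalPt a ε) a + (dist a b + dist b (startPt b ε)) :=
          le_trans (dist_triangle _ a _) (by
            have := dist_triangle a b (startPt b ε); linarith)
      _ ≤ ε / 2 + (dist a b + ε / 2) := by
          have ha : dist (goalPt a ε) a = ε / 2 := by
            simp only [goalPt, Complex.dist_eq]
            have : a + (ε : ℂ) / 2 - a = (ε : ℂ) / 2 := by ring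
            rw [this]; simp [abs_of_nonneg hε.le]
          have hb : dist b (startPt b ε) = ε / 2 := by
            simp only [startPt, Complex.dist_eq]
            have : b - (b - (ε : ℂ) / 2) = (ε : ℂ) / 2 := by ring
            rw [this]; simp [abs_of_nonneg hε.le]
          rw [ha, hb]
      _ = dist a b + ε := by ring
  unfold tourL tourT
  have hS1 : (∑ i : Fin n, dist (startPt (p (σ i).succ) ε) (goalPt (p (σ i).succ) ε))
      = n * ε := by
    simp [hsg]
  have hS2 : (∑ i : Fin (n - 1),
        dist (goalPt (p (σ ⟨i.1, by have := i.2; omega⟩).succ) ε)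
             (startPt (p (σ ⟨i.1 + 1, by have := i.2; omega⟩).succ) ε))
      ≤ (∑ i : Fin (n - 1),
        dist (p (σ ⟨i.1, by have := i.2; omega⟩).succ)
             (p (σ ⟨i.1 + 1, by have := i.2; omega⟩).succ)) + (n - 1 : ℕ) * ε := by
    calc (∑ i : Fin (n - 1),
        dist (goalPt (p (σ ⟨i.1, by have := i.2; omega⟩).succ) ε)
             (startPt (p (σ ⟨i.1 + 1, by have := i.2; omega⟩).succ) ε))
        ≤ ∑ i : Fin (n - 1),
            (dist (p (σ ⟨i.1, by have := i.2; omega⟩).succ)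
             (p (σ ⟨i.1 + 1, by have := i.2; omega⟩).succ) + ε) :=
          Finset.sum_le_sum (fun i _ => h3 _ _)
      _ = _ := by rw [Finset.sum_add_distrib]; simp [mul_comm]
  have hcast : ((n - 1 : ℕ) : ℝ) = (n : ℝ) - 1 := by
    have : 1 ≤ n := hn
    push_cast [Nat.cast_sub this]; ring
  have e1 := h1 (p 0) (p (σ ⟨0, hn⟩).succ)
  have e2 := h2 (p (σ ⟨n - 1, by omega⟩).succ) (p 0)
  rw [hS1]
  rw [hcast] at hS2
  have hn1 : (1 : ℝ) ≤ (n : ℝ) := by exact_mod_cast hn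
  nlinarith [hε.le]
end

section
/- Suppose all pairwise Euclidean distances dist(pᵢ, pⱼ), 0 ≤ i, j ≤ n, are integers and 0 < ε < 1/(4n). Then every permutation σ* that minimizes the labeled split-tour length L also minimizes the TSP tour length T, i.e., T(σ*) = min over all permutations σ of T(σ). -/
lemma dist_startPt (y : ℂ) (ε : ℝ) (hε : 0 ≤ ε) : dist (startPt y ε) y = ε / 2 := by
  simp [startPt, Complex.dist_eq, abs_of_nonneg hε]

lemma dist_goalPt (y : ℂ) (ε : ℝ) (hε : 0 ≤ ε) : dist (goalPt y ε) y = ε / 2 := by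
  simp [goalPt, Complex.dist_eq, abs_of_nonneg hε]

lemma dist_sg (y : ℂ) (ε : ℝ) (hε : 0 ≤ ε) : dist (startPt y ε) (goalPt y ε) = ε := by
  rw [show startPt y ε = goalPt y ε - ((ε:ℝ):ℂ) by simp [startPt, goalPt]; ring]
  simp [Complex.dist_eq, abs_of_nonneg hε]

lemma dist_perturb (x y a b : ℂ) : |dist x y - dist a b| ≤ dist x a + dist y b := by
  simpa [Real.dist_eq] using dist_dist_dist_le x y a b

lemma tourL_bounds (n : ℕ) (hn : 0 < n) (p : Fin (n + 1) → ℂ) (ε : ℝ) (hε : 0 ≤ ε)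
    (σ : Equiv.Perm (Fin n)) :
    tourT n hn p σ ≤ tourL n hn p ε σ ∧
      tourL n hn p ε σ ≤ tourT n hn p σ + 2 * n * ε := by
  have hcast : ((n - 1 : ℕ) : ℝ) = (n : ℝ) - 1 := by
    rw [Nat.cast_sub hn]; simp
  have hmid : ∑ i : Fin n, dist (startPt (p (σ i).succ) ε) (goalPt (p (σ i).succ) ε)
      = (n : ℝ) * ε := by
    simp [dist_sg _ _ hε, Finset.sum_const, mul_comm]
  have hA : |dist (p 0) (startPt (p (σ ⟨0, hn⟩).succ) ε)
      - dist (p 0) (p (σ ⟨0, hn⟩).succ)| ≤ ε / 2 := by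
    have := dist_perturb (p 0) (startPt (p (σ ⟨0, hn⟩).succ) ε) (p 0) (p (σ ⟨0, hn⟩).succ)
    simpa [dist_startPt _ _ hε] using this
  have hC : |dist (goalPt (p (σ ⟨n - 1, by omega⟩).succ) ε) (p 0)
      - dist (p (σ ⟨n - 1, by omega⟩).succ) (p 0)| ≤ ε / 2 := by
    have := dist_perturb (goalPt (p (σ ⟨n - 1, by omega⟩).succ) ε) (p 0)
      (p (σ ⟨n - 1, by omega⟩).succ) (p 0)
    simpa [dist_goalPt _ _ hε] using this
  have hB : |(∑ i : Fin (n - 1),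
        dist (goalPt (p (σ ⟨i.1, by have := i.2; omega⟩).succ) ε)
             (startPt (p (σ ⟨i.1 + 1, by have := i.2; omega⟩).succ) ε))
      - ∑ i : Fin (n - 1),
        dist (p (σ ⟨i.1, by have := i.2; omega⟩).succ)
             (p (σ ⟨i.1 + 1, by have := i.2; omega⟩).succ)| ≤ ((n : ℝ) - 1) * ε := by
    rw [← Finset.sum_sub_distrib]
    calc |∑ i : Fin (n-1), (dist (goalPt (p (σ ⟨i.1, by have := i.2; omega⟩).succ) ε)
             (startPt (p (σ ⟨i.1 + 1, by have := i.2; omega⟩).succ) ε)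
          - dist (p (σ ⟨i.1, by have := i.2; omega⟩).succ)
             (p (σ ⟨i.1 + 1, by have := i.2; omega⟩).succ))|
        ≤ ∑ i : Fin (n-1), |dist (goalPt (p (σ ⟨i.1, by have := i.2; omega⟩).succ) ε)
             (startPt (p (σ ⟨i.1 + 1, by have := i.2; omega⟩).succ) ε)
          - dist (p (σ ⟨i.1, by have := i.2; omega⟩).succ)
             (p (σ ⟨i.1 + 1, by have := i.2; omega⟩).succ)| :=
          Finset.abs_sum_le_sum_abs _ _
      _ ≤ ∑ _i : Fin (n-1), ε := by
          apply Finset.sum_le_sum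
          intro i _
          have := dist_perturb (goalPt (p (σ ⟨i.1, by have := i.2; omega⟩).succ) ε)
            (startPt (p (σ ⟨i.1 + 1, by have := i.2; omega⟩).succ) ε)
            (p (σ ⟨i.1, by have := i.2; omega⟩).succ)
            (p (σ ⟨i.1 + 1, by have := i.2; omega⟩).succ)
          rw [dist_goalPt _ _ hε, dist_startPt _ _ hε] at this
          linarith
      _ = ((n : ℝ) - 1) * ε := by
          simp [Finset.sum_const, hcast, mul_comm]
  rw [abs_le] at hA hB hC
  unfold tourT tourL
  rw [hmid]
  constructor <;> nlinarith [hA.1, hA.2, hB.1, hB.2, hC.1, hC.2, hε]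

lemma tourT_int (n : ℕ) (hn : 0 < n) (p : Fin (n + 1) → ℂ)
    (hint : ∀ i j : Fin (n + 1), ∃ m : ℤ, dist (p i) (p j) = (m : ℝ))
    (σ : Equiv.Perm (Fin n)) : ∃ m : ℤ, tourT n hn p σ = (m : ℝ) := by
  choose f hf using hint
  refine ⟨f 0 ((σ ⟨0, hn⟩).succ)
      + ∑ i : Fin (n - 1), f ((σ ⟨i.1, by have := i.2; omega⟩).succ)
          ((σ ⟨i.1 + 1, by have := i.2; omega⟩).succ)
      + f ((σ ⟨n - 1, by omega⟩).succ) 0, ?_⟩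
  unfold tourT
  push_cast
  simp [hf]

/-- Suppose all pairwise Euclidean distances dist(pᵢ,pⱼ) are integers and 0 < ε < 1/(4n).
Then every permutation σ* minimizing the labeled split-tour length L also minimizes the
TSP tour length T. -/
theorem stmt_2 (n : ℕ) (hn : 0 < n) (p : Fin (n + 1) → ℂ)
    (hint : ∀ i j : Fin (n + 1), ∃ m : ℤ, dist (p i) (p j) = (m : ℝ))
    (ε : ℝ) (hε : 0 < ε) (hε' : ε < 1 / (4 * n))
    (σstar : Equiv.Perm (Fin n)) (hopt : ∀ σ, tourL n hn p ε σstar ≤ tourL n hn p ε σ) :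
    ∀ σ, tourT n hn p σstar ≤ tourT n hn p σ := by
  intro σ
  obtain ⟨h1, _⟩ := tourL_bounds n hn p ε hε.le σstar
  obtain ⟨_, h2⟩ := tourL_bounds n hn p ε hε.le σ
  have h3 := hopt σ
  obtain ⟨m1, hm1⟩ := tourT_int n hn p hint σstar
  obtain ⟨m2, hm2⟩ := tourT_int n hn p hint σ
  have hn' : (0 : ℝ) < n := by exact_mod_cast hn
  have hsmall : 2 * (n : ℝ) * ε < 1 / 2 := by
    have h5 : ε * (4 * (n : ℝ)) < 1 := (lt_div_iff₀ (by positivity : (0:ℝ) < 4 * n)).mp hε'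
    nlinarith
  have hlt : (m1 : ℝ) < m2 + 1 := by
    rw [← hm1, ← hm2]; linarith
  have hle : m1 ≤ m2 := by
    have : m1 < m2 + 1 := by exact_mod_cast hlt
    omega
  rw [hm1, hm2]
  exact_mod_cast hle
end

section
/- Suppose all pairwise Euclidean distances dist(pᵢ, pⱼ), 0 ≤ i, j ≤ n, are integers and 0 < ε < 1/(4n). Let D_opt = min over permutations σ of T(σ) and L_opt = min over permutations σ of L(σ). Then D_opt ≤ L_opt < D_opt + 1/2; in particular D_opt = ⌊L_opt⌋. -/
/-!
Moving an endpoint of a segment by `δ` changes its length by at most `δ`. So each of the `n + 1`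
travel edges of a split tour differs from the corresponding edge of the plain tour by at most `ε`
in total, while the `n` edges `sᵢgᵢ` contribute exactly `nε`; hence `T(σ) ≤ L(σ) ≤ T(σ) + 2nε`
for every `σ`, and `2nε < 1/2`. As a sum of integer distances, `D_opt` is an integer, which
then must be `⌊L_opt⌋`.
-/

section SplitPoints

variable (ε : ℝ)

lemma dist_startPt_self (q : ℂ) : dist (startPt q ε) q = |ε| / 2 := by
  rw [startPt, dist_self_sub_left, norm_div, Complex.norm_real, Real.norm_eq_abs]
  norm_num

lemma dist_goalPt_self (q : ℂ) : dist (goalPt q ε) q = |ε| / 2 := by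
  rw [goalPt, dist_self_add_left, norm_div, Complex.norm_real, Real.norm_eq_abs]
  norm_num

lemma dist_startPt_goalPt (q : ℂ) : dist (startPt q ε) (goalPt q ε) = |ε| := by
  have h : startPt q ε - goalPt q ε = -(ε : ℂ) := by rw [startPt, goalPt]; ring
  rw [Complex.dist_eq, h, norm_neg, Complex.norm_real, Real.norm_eq_abs]

lemma abs_dist_startPt_sub_dist_le (a b : ℂ) :
    |dist a (startPt b ε) - dist a b| ≤ |ε| / 2 := by
  simpa only [dist_comm a, dist_startPt_self] using abs_dist_sub_le (startPt b ε) b a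

lemma abs_dist_goalPt_sub_dist_le (a b : ℂ) :
    |dist (goalPt a ε) b - dist a b| ≤ |ε| / 2 :=
  (abs_dist_sub_le _ _ b).trans (dist_goalPt_self ε a).le

lemma abs_dist_goalPt_startPt_sub_dist_le (a b : ℂ) :
    |dist (goalPt a ε) (startPt b ε) - dist a b| ≤ |ε| :=
  calc |dist (goalPt a ε) (startPt b ε) - dist a b|
      = |(dist (goalPt a ε) (startPt b ε) - dist a (startPt b ε))
          + (dist a (startPt b ε) - dist a b)| := by ring_nf
    _ ≤ |ε| / 2 + |ε| / 2 :=
      (abs_add_le _ _).trans (add_le_add (abs_dist_goalPt_sub_dist_le ε a _)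
        (abs_dist_startPt_sub_dist_le ε a b))
    _ = |ε| := add_halves _

lemma abs_sum_dist_goalPt_startPt_sub_le {ι : Type*} (s : Finset ι) (a b : ι → ℂ) :
    |∑ i ∈ s, dist (goalPt (a i) ε) (startPt (b i) ε) - ∑ i ∈ s, dist (a i) (b i)|
      ≤ s.card * |ε| := by
  rw [← Finset.sum_sub_distrib]
  refine (Finset.abs_sum_le_sum_abs _ _).trans ?_
  simpa using Finset.sum_le_sum fun i _ => abs_dist_goalPt_startPt_sub_dist_le ε (a i) (b i)

end SplitPoints

lemma tourL_mem_Icc_tourT (n : ℕ) (hn : 0 < n) (p : Fin (n + 1) → ℂ) (ε : ℝ)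
    (σ : Equiv.Perm (Fin n)) :
    tourL n hn p ε σ ∈ Set.Icc (tourT n hn p σ) (tourT n hn p σ + 2 * n * |ε|) := by
  have hfirst := abs_dist_startPt_sub_dist_le ε (p 0) (p (σ ⟨0, hn⟩).succ)
  have hlast := abs_dist_goalPt_sub_dist_le ε (p (σ ⟨n - 1, by omega⟩).succ) (p 0)
  have hmiddle := abs_sum_dist_goalPt_startPt_sub_le ε Finset.univ
    (fun i : Fin (n - 1) => p (σ ⟨i.1, by have := i.2; omega⟩).succ)
    (fun i : Fin (n - 1) => p (σ ⟨i.1 + 1, by have := i.2; omega⟩).succ)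
  have hsplit : ∑ i : Fin n, dist (startPt (p (σ i).succ) ε) (goalPt (p (σ i).succ) ε)
      = n * |ε| := by
    simp [dist_startPt_goalPt]
  have hcard : ((Finset.univ : Finset (Fin (n - 1))).card : ℝ) = n - 1 := by
    rw [Finset.card_univ, Fintype.card_fin, Nat.cast_pred hn]
  rw [hcard] at hmiddle
  rw [abs_le] at hfirst hlast hmiddle
  simp only [tourL, tourT, hsplit, Set.mem_Icc]
  constructor <;> linarith

lemma exists_int_tourT_eq (n : ℕ) (hn : 0 < n) (p : Fin (n + 1) → ℂ)
    (hint : ∀ i j : Fin (n + 1), ∃ m : ℤ, dist (p i) (p j) = (m : ℝ))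
    (σ : Equiv.Perm (Fin n)) : ∃ m : ℤ, tourT n hn p σ = m := by
  choose d hd using hint
  exact ⟨_, by simp only [tourT, hd]; norm_cast⟩

/-- Suppose all pairwise Euclidean distances dist(pᵢ,pⱼ) are integers and 0 < ε < 1/(4n).
Let D_opt = min over σ of T(σ) and L_opt = min over σ of L(σ).
Then D_opt ≤ L_opt < D_opt + 1/2; in particular D_opt = ⌊L_opt⌋. -/
theorem stmt_3 (n : ℕ) (hn : 0 < n) (p : Fin (n + 1) → ℂ)
    (hint : ∀ i j : Fin (n + 1), ∃ m : ℤ, dist (p i) (p j) = (m : ℝ))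
    (ε : ℝ) (hε : 0 < ε) (hε' : ε < 1 / (4 * n))
    (Dopt Lopt : ℝ)
    (hD : IsLeast (Set.range (tourT n hn p)) Dopt)
    (hL : IsLeast (Set.range (tourL n hn p ε)) Lopt) :
    Dopt ≤ Lopt ∧ Lopt < Dopt + 1 / 2 ∧ Dopt = (⌊Lopt⌋ : ℝ) := by
  obtain ⟨σD, rfl⟩ := hD.1
  obtain ⟨σL, rfl⟩ := hL.1
  have hsmall : 2 * n * |ε| < 1 / 2 := by
    rw [abs_of_pos hε]
    rw [lt_div_iff₀ (by positivity)] at hε'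
    linarith
  have hDL : tourT n hn p σD ≤ tourL n hn p ε σL :=
    (hD.2 ⟨σL, rfl⟩).trans (tourL_mem_Icc_tourT n hn p ε σL).1
  have hLD : tourL n hn p ε σL < tourT n hn p σD + 1 / 2 :=
    (hL.2 ⟨σD, rfl⟩).trans_lt (by linarith [(tourL_mem_Icc_tourT n hn p ε σD).2])
  refine ⟨hDL, hLD, ?_⟩
  obtain ⟨m, hm⟩ := exists_int_tourT_eq n hn p hint σD
  rw [hm] at hDL hLD ⊢
  rw [Int.cast_inj, eq_comm, Int.floor_eq_iff]
  constructor <;> linarith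
end

section
/- If the dependency digraph of a tabletop rearrangement instance contains a directed cycle, then every plan for the instance consists of at least 1 + |{i : sᵢ ≠ gᵢ}| pick-and-place actions. In particular, if sᵢ ≠ gᵢ for all i, every plan has at least n + 1 actions. -/
/-
Count the displaced objects, those not at their goals. One action changes this count by at
most one, so a plan needs at least that many actions, and it needs one more if some action
puts an object somewhere other than its goal. Suppose instead every action puts an object
onto its goal, and re-read the dependency digraph from the current configuration after each
action. An object just put onto its goal has no outgoing arc, as its disc would meet that of
an object still at its start, so the cycle avoids it; all arcs avoiding it are unchanged. The
cycle thus survives to the end, where start and goal coincide and there are no arcs at all.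
-/

open Metric in
/-- A configuration of `n` unit-disc objects in the plane (modeled by `ℂ`) is feasible
if the closed unit discs centered at the object positions are pairwise disjoint. -/
def FeasibleConfig {n : ℕ} (c : Fin n → ℂ) : Prop :=
  ∀ i j : Fin n, i ≠ j → Disjoint (closedBall (c i) 1) (closedBall (c j) 1)

/-- A pick-and-place action changes the position of exactly one object. -/
def PickPlace {n : ℕ} (c c' : Fin n → ℂ) : Prop :=
  ∃ i : Fin n, c' i ≠ c i ∧ ∀ j : Fin n, j ≠ i → c' j = c j

/-- `plan`, the list of configurations resulting from the successive pick-and-place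
actions, is a plan transforming the start configuration `s` into the goal
configuration `g`: each action changes the position of exactly one object, each
resulting configuration is feasible, and the final configuration is the goal.  The
number of actions of the plan is `plan.length`. -/
def IsPlan {n : ℕ} (s g : Fin n → ℂ) (plan : List (Fin n → ℂ)) : Prop :=
  List.Chain PickPlace s plan ∧ (∀ c ∈ plan, FeasibleConfig c) ∧
    (s :: plan).getLast (by simp) = g

open Metric in
/-- The dependency digraph of the instance: an arc from `i` to `j` (for `i ≠ j`) exactly
when the closed unit disc centered at `g i` intersects the closed unit disc centered at
`s j`. -/
def DepArc {n : ℕ} (s g : Fin n → ℂ) (i j : Fin n) : Prop :=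
  i ≠ j ∧ (Metric.closedBall (g i) 1 ∩ Metric.closedBall (s j) 1).Nonempty

theorem Relation.TransGen.mono_of_forall_not_rel {α : Type*} {R R' : α → α → Prop} {k : α}
    (hk : ∀ b, ¬ R k b) (hR : ∀ a b, R a b → b ≠ k → R' a b) {a b : α}
    (hab : TransGen R a b) (hb : b ≠ k) : TransGen R' a b := by
  induction hab with
  | single h => exact .single (hR _ _ h hb)
  | @tail c b _ hcb ih =>
    have hc : c ≠ k := by rintro rfl; exact hk b hcb
    exact .tail (ih hc) (hR _ _ hcb hb)

section Displaced

variable {ι α : Type*} {c c' d : ι → α} {k : ι}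

theorem setOf_ne_subset_insert (h : ∀ j, j ≠ k → c' j = c j) :
    {i | c i ≠ d i} ⊆ insert k {i | c' i ≠ d i} := by
  intro i hi
  by_cases hik : i = k
  · exact .inl hik
  · exact .inr (by simpa [h i hik] using hi)

theorem ncard_setOf_ne_le_add_one [Finite ι] (h : ∀ j, j ≠ k → c' j = c j) :
    {i | c i ≠ d i}.ncard ≤ {i | c' i ≠ d i}.ncard + 1 :=
  (Set.ncard_le_ncard (setOf_ne_subset_insert h)).trans (Set.ncard_insert_le _ _)

theorem ncard_setOf_ne_le [Finite ι] (h : ∀ j, j ≠ k → c' j = c j) (hk : c' k ≠ d k) :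
    {i | c i ≠ d i}.ncard ≤ {i | c' i ≠ d i}.ncard := by
  refine Set.ncard_le_ncard ?_
  rw [← Set.insert_eq_of_mem (show k ∈ {i | c' i ≠ d i} from hk)]
  exact setOf_ne_subset_insert h

end Displaced

section Plan

variable {n : ℕ} {s g : Fin n → ℂ}

theorem isPlan_nil_iff : IsPlan s g [] ↔ s = g :=
  ⟨fun h => h.2.2, fun h => ⟨.singleton s, by simp, h⟩⟩

theorem isPlan_cons_iff {c : Fin n → ℂ} {plan : List (Fin n → ℂ)} :
    IsPlan s g (c :: plan) ↔ PickPlace s c ∧ FeasibleConfig c ∧ IsPlan c g plan := by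
  simp only [IsPlan, List.mem_cons, forall_eq_or_imp]
  exact ⟨fun ⟨hchain, ⟨hc, hplan⟩, hlast⟩ => ⟨(List.isChain_cons_cons.1 hchain).1, hc,
      (List.isChain_cons_cons.1 hchain).2, hplan, hlast⟩,
    fun ⟨hsc, hc, hchain, hplan, hlast⟩ =>
      ⟨List.isChain_cons_cons.2 ⟨hsc, hchain⟩, ⟨hc, hplan⟩, hlast⟩⟩

theorem FeasibleConfig.not_depArc {c : Fin n → ℂ} (hc : FeasibleConfig c) {i j : Fin n}
    (hi : c i = g i) (hj : c j = s j) : ¬ DepArc s g i j :=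
  fun ⟨hij, _, hpg, hps⟩ => Set.disjoint_left.1 (hc i j hij) (hi ▸ hpg) (hj ▸ hps)

theorem IsPlan.ncard_ne_le_length {plan : List (Fin n → ℂ)} (hplan : IsPlan s g plan) :
    {i | s i ≠ g i}.ncard ≤ plan.length := by
  induction plan generalizing s with
  | nil => simp [isPlan_nil_iff.1 hplan]
  | cons c plan ih =>
    obtain ⟨⟨k, -, hk⟩, -, hrest⟩ := isPlan_cons_iff.1 hplan
    have hrest_bound := ih hrest
    have hstep := ncard_setOf_ne_le_add_one (d := g) hk
    simp only [List.length_cons]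
    omega

theorem IsPlan.ncard_ne_lt_length_of_cycle (hg : FeasibleConfig g) {plan : List (Fin n → ℂ)}
    (hplan : IsPlan s g plan) {x : Fin n} (hx : Relation.TransGen (DepArc s g) x x) :
    {i | s i ≠ g i}.ncard < plan.length := by
  induction plan generalizing s with
  | nil =>
    obtain rfl := isPlan_nil_iff.1 hplan
    obtain ⟨y, hxy, -⟩ := Relation.TransGen.head'_iff.1 hx
    exact absurd hxy (hg.not_depArc rfl rfl)
  | cons c plan ih =>
    obtain ⟨⟨k, -, hk⟩, hc, hrest⟩ := isPlan_cons_iff.1 hplan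
    by_cases hkg : c k = g k
    · have hsink : ∀ j, ¬ DepArc s g k j := fun j hkj => hc.not_depArc hkg (hk j hkj.1.symm) hkj
      have hxk : x ≠ k := by
        rintro rfl
        obtain ⟨y, hxy, -⟩ := Relation.TransGen.head'_iff.1 hx
        exact hsink y hxy
      have hx' : Relation.TransGen (DepArc c g) x x :=
        hx.mono_of_forall_not_rel hsink (fun a b hab hb => ⟨hab.1, hk b hb ▸ hab.2⟩) hxk
      have hrest_bound := ih hrest hx'
      have hstep := ncard_setOf_ne_le_add_one (d := g) hk
      simp only [List.length_cons]
      omega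
    · have hrest_bound := hrest.ncard_ne_le_length
      have hstep := ncard_setOf_ne_le (d := g) hk hkg
      simp only [List.length_cons]
      omega

end Plan

open Metric in
theorem stmt_12_general {n : ℕ} (s g : Fin n → ℂ)
    (hg : ∀ i j : Fin n, i ≠ j → Disjoint (closedBall (g i) 1) (closedBall (g j) 1))
    (hcyc : ∃ x : Fin n, Relation.TransGen (DepArc s g) x x) :
    (∀ plan : List (Fin n → ℂ), IsPlan s g plan →
        1 + {i : Fin n | s i ≠ g i}.ncard ≤ plan.length) ∧
    ((∀ i, s i ≠ g i) → ∀ plan : List (Fin n → ℂ), IsPlan s g plan →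
        n + 1 ≤ plan.length) := by
  obtain ⟨x, hx⟩ := hcyc
  have hbound : ∀ plan, IsPlan s g plan → 1 + {i | s i ≠ g i}.ncard ≤ plan.length :=
    fun plan hplan => by have := hplan.ncard_ne_lt_length_of_cycle hg hx; omega
  refine ⟨hbound, fun hne plan hplan => ?_⟩
  have huniv : {i | s i ≠ g i} = Set.univ := Set.eq_univ_of_forall hne
  simpa [huniv, add_comm] using hbound plan hplan

open Metric in
/-- If the dependency digraph of a tabletop rearrangement instance contains a directed
cycle, then every plan consists of at least `1 + |{i : sᵢ ≠ gᵢ}|` pick-and-place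
actions; in particular, if `sᵢ ≠ gᵢ` for all `i`, every plan has at least `n + 1`
actions. -/
theorem stmt_12 {n : ℕ} (s g : Fin n → ℂ)
    (hs : ∀ i j : Fin n, i ≠ j → Disjoint (closedBall (s i) 1) (closedBall (s j) 1))
    (hg : ∀ i j : Fin n, i ≠ j → Disjoint (closedBall (g i) 1) (closedBall (g j) 1))
    (hcyc : ∃ x : Fin n, Relation.TransGen (DepArc s g) x x) :
    (∀ plan : List (Fin n → ℂ), IsPlan s g plan →
        1 + {i : Fin n | s i ≠ g i}.ncard ≤ plan.length) ∧
    ((∀ i, s i ≠ g i) → ∀ plan : List (Fin n → ℂ), IsPlan s g plan →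
        n + 1 ≤ plan.length) :=
  stmt_12_general s g hg hcyc
end

section
/- Every plan for a tabletop rearrangement instance consists of at least |{i : sᵢ ≠ gᵢ}| + ν pick-and-place actions, where ν is the minimum cardinality of a feedback vertex set of the dependency digraph of the instance. -/
/-- `S` is a feedback vertex set of the digraph with arc relation `A`: the subdigraph
induced on the complement of `S` contains no directed cycle (no nontrivial closed
directed walk). -/
def IsFVS {V : Type*} (A : V → V → Prop) (S : Set V) : Prop :=
  ∀ x : V, ¬ Relation.TransGen (fun u v => A u v ∧ u ∉ S ∧ v ∉ S) x x

/-- `ν(D)`: the minimum cardinality of a feedback vertex set of the digraph with vertex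
type `V` and arc relation `A`. -/
noncomputable def nuFVS {V : Type*} (A : V → V → Prop) : ℕ :=
  sInf {k | ∃ S : Set V, IsFVS A S ∧ S.ncard = k}

/-!
Record, for every object, the set of steps at which a plan moves it. An object with
`sᵢ ≠ gᵢ` moves at least once, so the plan has at least `|{i : sᵢ ≠ gᵢ}| + |X|` actions,
where `X` is the set of objects moved at least twice. `X` is a feedback vertex set: if
`i → j` is an arc and `i` moves only once, at step `t`, then after step `t` the disc of `i`
sits at `gᵢ`, which meets the disc at `sⱼ`, so `j` has already left `sⱼ` at an earlier step.
Hence the first move time strictly decreases along every arc outside `X`.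
-/

open Finset Metric

section FeedbackVertexSet

variable {V : Type*} {A : V → V → Prop} {S : Set V}

theorem IsFVS.of_forall_lt {β : Type*} [Preorder β] (f : V → β)
    (hf : ∀ u v, A u v → u ∉ S → v ∉ S → f v < f u) : IsFVS A S := by
  intro x hx
  suffices ∀ a b, Relation.TransGen (fun u v => A u v ∧ u ∉ S ∧ v ∉ S) a b → f b < f a from
    lt_irrefl _ (this x x hx)
  intro a b hab
  induction hab with
  | single h => exact hf _ _ h.1 h.2.1 h.2.2
  | tail _ h ih => exact (hf _ _ h.1 h.2.1 h.2.2).trans ih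

theorem IsFVS.nuFVS_le_ncard (h : IsFVS A S) : nuFVS A ≤ S.ncard :=
  Nat.sInf_le ⟨S, h, rfl⟩

end FeedbackVertexSet

section MoveTimes

variable {ι α : Type*} [DecidableEq α] (c : ℕ → ι → α) (m : ℕ)

def moveTimes (i : ι) : Finset ℕ :=
  {t ∈ range m | c (t + 1) i ≠ c t i}

variable {c m}

@[simp]
theorem mem_moveTimes {i : ι} {t : ℕ} : t ∈ moveTimes c m i ↔ t < m ∧ c (t + 1) i ≠ c t i := by
  simp [moveTimes]

theorem apply_eq_of_forall_moveTimes {i : ι} {a b : ℕ} (hab : a ≤ b) (hbm : b ≤ m)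
    (h : ∀ t ∈ moveTimes c m i, t < a ∨ b ≤ t) : c b i = c a i := by
  induction b, hab using Nat.le_induction with
  | base => rfl
  | succ b hab ih =>
    have hb : c (b + 1) i = c b i := by
      by_contra hne
      have := h b (mem_moveTimes.2 ⟨hbm, hne⟩)
      omega
    rw [hb, ih (by omega) fun t ht => (h t ht).imp_right fun _ => by omega]

theorem sum_card_moveTimes [Fintype ι] (hc : ∀ t < m, ∃! i, c (t + 1) i ≠ c t i) :
    ∑ i, #(moveTimes c m i) = m := by
  calc ∑ i, #(moveTimes c m i)
      = ∑ t ∈ range m, #{i | c (t + 1) i ≠ c t i} :=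
        sum_card_bipartiteAbove_eq_sum_card_bipartiteBelow _
    _ = ∑ t ∈ range m, 1 := sum_congr rfl fun t ht =>
        (Fintype.existsUnique_iff_card_one _).1 (hc t (mem_range.1 ht))
    _ = m := by simp

end MoveTimes

theorem Finset.card_filter_add_card_filter_two_le_sum {ι : Type*} (s : Finset ι) (p : ι → Prop)
    [DecidablePred p] (f : ι → ℕ) (hp : ∀ i ∈ s, p i → f i ≠ 0) :
    #{i ∈ s | p i} + #{i ∈ s | 2 ≤ f i} ≤ ∑ i ∈ s, f i := by
  rw [card_filter, card_filter, ← sum_add_distrib]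
  refine sum_le_sum fun i hi => ?_
  by_cases hpi : p i
  · have := hp i hi hpi
    split_ifs <;> omega
  · split_ifs <;> omega

theorem PickPlace.existsUnique_ne {n : ℕ} {c c' : Fin n → ℂ} (h : PickPlace c c') :
    ∃! i, c' i ≠ c i :=
  let ⟨i, hi, hj⟩ := h
  ⟨i, hi, fun j hne => by_contra fun hji => hne (hj j hji)⟩

section Plan

variable {n : ℕ} {s g : Fin n → ℂ} {plan : List (Fin n → ℂ)}

def planConfig (s g : Fin n → ℂ) (plan : List (Fin n → ℂ)) (k : ℕ) : Fin n → ℂ :=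
  (s :: plan).getD k g

noncomputable def planMoves (s g : Fin n → ℂ) (plan : List (Fin n → ℂ)) : Fin n → Finset ℕ :=
  moveTimes (planConfig s g plan) plan.length

theorem planConfig_zero : planConfig s g plan 0 = s := rfl

theorem planConfig_eq_getElem {k : ℕ} (hk : k < (s :: plan).length) :
    planConfig s g plan k = (s :: plan)[k] :=
  List.getD_eq_getElem _ _ hk

theorem planConfig_eq_of_forall_planMoves {i : Fin n} {a b : ℕ} (hab : a ≤ b)
    (hb : b ≤ plan.length) (h : ∀ t ∈ planMoves s g plan i, t < a ∨ b ≤ t) :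
    planConfig s g plan b i = planConfig s g plan a i :=
  apply_eq_of_forall_moveTimes hab hb h

namespace IsPlan

variable (h : IsPlan s g plan)
include h

theorem planConfig_length : planConfig s g plan plan.length = g := by
  rw [planConfig_eq_getElem (by simp), ← h.2.2, List.getLast_eq_getElem]
  rfl

theorem pickPlace {t : ℕ} (ht : t < plan.length) :
    PickPlace (planConfig s g plan t) (planConfig s g plan (t + 1)) := by
  rw [planConfig_eq_getElem (by simp; omega), planConfig_eq_getElem (by simp; omega)]
  exact List.isChain_iff_getElem.1 h.1 t (by simpa)

theorem feasibleConfig {t : ℕ} (ht : t < plan.length) :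
    FeasibleConfig (planConfig s g plan (t + 1)) := by
  rw [planConfig_eq_getElem (by simp; omega)]
  exact h.2.1 _ (List.getElem_mem ht)

theorem sum_card_planMoves : ∑ i, #(planMoves s g plan i) = plan.length :=
  sum_card_moveTimes fun _ ht => (h.pickPlace ht).existsUnique_ne

theorem planMoves_nonempty {i : Fin n} (hi : s i ≠ g i) : (planMoves s g plan i).Nonempty := by
  by_contra! hempty
  refine hi ?_
  have : planConfig s g plan plan.length i = planConfig s g plan 0 i :=
    planConfig_eq_of_forall_planMoves (Nat.zero_le _) le_rfl fun t ht => by simp [hempty] at ht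
  rwa [h.planConfig_length, planConfig_zero, eq_comm] at this

theorem exists_planMoves_lt {u v : Fin n} (huv : DepArc s g u v) {tu : ℕ}
    (hu : planMoves s g plan u = {tu}) : ∃ tv ∈ planMoves s g plan v, tv < tu := by
  obtain ⟨hne, x, hxu, hxv⟩ := huv
  obtain ⟨htu, hmove⟩ := mem_moveTimes.1 (hu ▸ mem_singleton_self tu :
    tu ∈ planMoves s g plan u)
  have hgoal : planConfig s g plan (tu + 1) u = g u := by
    have : planConfig s g plan plan.length u = planConfig s g plan (tu + 1) u :=
      planConfig_eq_of_forall_planMoves (by omega) le_rfl fun t ht => by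
        rw [hu, mem_singleton] at ht
        omega
    rwa [h.planConfig_length, eq_comm] at this
  have hleft : planConfig s g plan (tu + 1) v ≠ s v := by
    intro hstay
    have := h.feasibleConfig htu u v hne
    rw [hgoal, hstay] at this
    exact Set.not_disjoint_iff.2 ⟨x, hxu, hxv⟩ this
  -- `v` cannot move at step `tu` too, since each action moves a single object
  by_contra! hlate
  refine hleft (planConfig_eq_of_forall_planMoves (Nat.zero_le _) (by omega) fun t ht => Or.inr ?_)
  obtain ⟨-, hvmove⟩ := mem_moveTimes.1 ht
  obtain rfl | hlt := (hlate t ht).eq_or_lt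
  · exact absurd ((h.pickPlace htu).existsUnique_ne.unique hmove hvmove) hne
  · omega

theorem isFVS_planMoves
    (hs : ∀ i j, i ≠ j → Disjoint (closedBall (s i) 1) (closedBall (s j) 1)) :
    IsFVS (DepArc s g) {i | 2 ≤ #(planMoves s g plan i)} := by
  refine IsFVS.of_forall_lt (fun i => (planMoves s g plan i).min) fun u v huv hu hv => ?_
  have hsu : s u ≠ g u := fun hsg =>
    Set.not_disjoint_iff_nonempty_inter.2 (by rw [hsg]; exact huv.2) (hs u v huv.1)
  obtain ⟨tu, htu⟩ : ∃ tu, planMoves s g plan u = {tu} := by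
    have hpos := (h.planMoves_nonempty hsu).card_pos
    have hlt : #(planMoves s g plan u) < 2 := not_le.1 hu
    exact card_eq_one.1 (by omega)
  obtain ⟨tv, htv, hlt⟩ := h.exists_planMoves_lt huv htu
  calc (planMoves s g plan v).min ≤ tv := min_le htv
    _ < tu := by exact_mod_cast hlt
    _ = (planMoves s g plan u).min := by rw [htu, min_singleton]; rfl

end IsPlan

end Plan

open Metric in
theorem stmt_13_general {n : ℕ} (s g : Fin n → ℂ)
    (hs : ∀ i j : Fin n, i ≠ j → Disjoint (closedBall (s i) 1) (closedBall (s j) 1)) :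
    ∀ plan : List (Fin n → ℂ), IsPlan s g plan →
      {i : Fin n | s i ≠ g i}.ncard + nuFVS (DepArc s g) ≤ plan.length := by
  intro plan h
  have hncard (p : Fin n → Prop) [DecidablePred p] : {i | p i}.ncard = #{i | p i} := by
    rw [← coe_filter_univ, Set.ncard_coe_finset]
  calc {i | s i ≠ g i}.ncard + nuFVS (DepArc s g)
      ≤ #{i | s i ≠ g i} + #{i | 2 ≤ #(planMoves s g plan i)} := by
        rw [hncard]
        gcongr
        rw [← hncard]
        exact (h.isFVS_planMoves hs).nuFVS_le_ncard
    _ ≤ ∑ i, #(planMoves s g plan i) :=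
        card_filter_add_card_filter_two_le_sum _ _ _ fun i _ hi =>
          (h.planMoves_nonempty hi).card_pos.ne'
    _ = plan.length := h.sum_card_planMoves

open Metric in
/-- Every plan for a tabletop rearrangement instance consists of at least
`|{i : sᵢ ≠ gᵢ}| + ν` pick-and-place actions, where `ν` is the minimum cardinality of a
feedback vertex set of the dependency digraph of the instance. -/
theorem stmt_13 {n : ℕ} (s g : Fin n → ℂ)
    (hs : ∀ i j : Fin n, i ≠ j → Disjoint (closedBall (s i) 1) (closedBall (s j) 1))
    (hg : ∀ i j : Fin n, i ≠ j → Disjoint (closedBall (g i) 1) (closedBall (g j) 1)) :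
    ∀ plan : List (Fin n → ℂ), IsPlan s g plan →
      {i : Fin n | s i ≠ g i}.ncard + nuFVS (DepArc s g) ≤ plan.length :=
  stmt_13_general s g hs
end

section
/- Let D = (V, A) be a digraph without self-loops in which every vertex has in-degree at most 2 and out-degree at most 2, and let D' be the subdivision of D, with vertex set V ⊔ A. Then there exist maps s, g : V ⊔ A → ℝ² such that: the closed unit discs centered at the points s(x), x ∈ V ⊔ A, are pairwise disjoint; the closed unit discs centered at the points g(x), x ∈ V ⊔ A, are pairwise disjoint; and for all distinct x, y ∈ V ⊔ A, the closed unit disc centered at g(x) intersects the closed unit disc centered at s(y) if and only if (x, y) is an arc of D'. In other words, D' is realizable as the dependency digraph of a tabletop rearrangement instance with unit discs. -/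
/-- The arc relation of the subdivision `D'` of a digraph `D = (V, A)`.
Vertices of `D'` are `V ⊕ A`; each arc `a = (u,v)` of `D` gives arcs `(u,a)` and `(a,v)`,
and there are no other arcs. -/
def Subdiv {V : Type*} (A : V → V → Prop) :
    V ⊕ {a : V × V // A a.1 a.2} → V ⊕ {a : V × V // A a.1 a.2} → Prop
  | Sum.inl u, Sum.inr a => a.1.1 = u
  | Sum.inr a, Sum.inl v => a.1.2 = v
  | _, _ => False

/-!
Put the objects on the grid `ℤ × ℤ`, the cell `(i, j)` at `3 i + 2 j I`: two unit discs on the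
grid meet exactly when they lie in the same column at most one row apart. Number the vertices
injectively by `n`. At the start, a vertex `v` sits on the axis in column `2 n(v)`, and the
(at most two) arcs leaving `u` sit in column `2 n(u) + 1`, on different sides of the axis. At
the goal the parities are exchanged: `v` moves to column `2 n(v) + 1` and the arcs entering `w`
to column `2 n(w)`, again on different sides. A goal disc and a start disc can then only meet in
a common column, which happens exactly for `g(u), s(a)` with `u` the tail of `a` and for
`g(a), s(w)` with `w` the head of `a`.
-/

open Function Metric Set

theorem closedBall_inter_closedBall_nonempty_iff {E : Type*} [NormedAddCommGroup E]
    [NormedSpace ℝ E] {x y : E} {δ ε : ℝ} (hδ : 0 ≤ δ) (hε : 0 ≤ ε) :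
    (closedBall x δ ∩ closedBall y ε).Nonempty ↔ dist x y ≤ δ + ε := by
  rw [← not_disjoint_iff_nonempty_inter, disjoint_closedBall_closedBall_iff hδ hε, not_lt]

theorem exists_bool_injOn {α : Type*} {s : Set α} (hs : s.Finite) (h : s.ncard ≤ 2) :
    ∃ f : α → Bool, InjOn f s := by
  have hle : s.encard ≤ (univ : Set Bool).encard := by
    rw [encard_univ, ← hs.cast_ncard_eq, ENat.card_eq_coe_fintype_card, Fintype.card_bool]
    exact_mod_cast h
  obtain ⟨f, -, hf⟩ := hs.exists_injOn_of_encard_le hle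
  exact ⟨f, hf⟩

def gridPoint (p : ℤ × ℤ) : ℂ :=
  ⟨3 * p.1, 2 * p.2⟩

def GridNear (p q : ℤ × ℤ) : Prop :=
  p.1 = q.1 ∧ |p.2 - q.2| ≤ 1

theorem int_nine_mul_sq_add_four_mul_sq_le_four_iff (a b : ℤ) :
    9 * a ^ 2 + 4 * b ^ 2 ≤ 4 ↔ a = 0 ∧ |b| ≤ 1 := by
  rw [← sq_le_one_iff_abs_le_one]
  constructor
  · intro h
    have ha := sq_nonneg a
    have hb := sq_nonneg b
    exact ⟨pow_eq_zero_iff two_ne_zero |>.mp (by omega), by omega⟩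
  · rintro ⟨rfl, hb⟩
    nlinarith

theorem dist_gridPoint_le_two_iff (p q : ℤ × ℤ) :
    dist (gridPoint p) (gridPoint q) ≤ 2 ↔ GridNear p q := by
  rw [Complex.dist_eq_re_im, Real.sqrt_le_left zero_le_two, GridNear, ← sub_eq_zero (a := p.1),
    ← int_nine_mul_sq_add_four_mul_sq_le_four_iff]
  simp only [gridPoint]
  constructor <;> intro h
  · have : ((9 * (p.1 - q.1) ^ 2 + 4 * (p.2 - q.2) ^ 2 : ℤ) : ℝ) ≤ 4 := by push_cast; linarith
    exact_mod_cast this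
  · have : ((9 * (p.1 - q.1) ^ 2 + 4 * (p.2 - q.2) ^ 2 : ℤ) : ℝ) ≤ 4 := by exact_mod_cast h
    push_cast at this; linarith

theorem disjoint_closedBall_gridPoint_iff (p q : ℤ × ℤ) :
    Disjoint (closedBall (gridPoint p) 1) (closedBall (gridPoint q) 1) ↔ ¬ GridNear p q := by
  rw [disjoint_closedBall_closedBall_iff zero_le_one zero_le_one, one_add_one_eq_two, ← not_le,
    dist_gridPoint_le_two_iff]

theorem closedBall_gridPoint_inter_nonempty_iff (p q : ℤ × ℤ) :
    (closedBall (gridPoint p) 1 ∩ closedBall (gridPoint q) 1).Nonempty ↔ GridNear p q := by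
  rw [closedBall_inter_closedBall_nonempty_iff zero_le_one zero_le_one, one_add_one_eq_two,
    dist_gridPoint_le_two_iff]

def boolSign (b : Bool) : ℤ :=
  if b then 1 else -1

theorem abs_boolSign (b : Bool) : |boolSign b| = 1 := by
  cases b <;> rfl

theorem abs_boolSign_sub_boolSign {b b' : Bool} (h : b ≠ b') : |boolSign b - boolSign b'| = 2 := by
  cases b <;> cases b' <;> first | exact absurd rfl h | rfl

abbrev Arc {V : Type*} (A : V → V → Prop) : Type _ :=
  {a : V × V // A a.1 a.2}

section Cells

variable {V : Type*} {A : V → V → Prop} (n : V → ℕ) (outLabel inLabel : V → V → Bool)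

def startCell : V ⊕ Arc A → ℤ × ℤ
  | .inl v => (2 * n v, 0)
  | .inr a => (2 * n a.1.1 + 1, boolSign (outLabel a.1.1 a.1.2))

def goalCell : V ⊕ Arc A → ℤ × ℤ
  | .inl v => (2 * n v + 1, 0)
  | .inr a => (2 * n a.1.2, boolSign (inLabel a.1.2 a.1.1))

variable {n outLabel inLabel}

theorem not_gridNear_startCell (hn : Injective n)
    (hout : ∀ v, InjOn (outLabel v) {w | A v w}) {x y : V ⊕ Arc A} (hxy : x ≠ y) :
    ¬ GridNear (startCell n outLabel x) (startCell n outLabel y) := by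
  rintro ⟨hcol, hrow⟩
  rcases x with u | a <;> rcases y with v | b <;> simp only [startCell] at hcol hrow
  · exact hxy (congrArg Sum.inl (hn (by omega)))
  · omega
  · omega
  · have htail : a.1.1 = b.1.1 := hn (by omega)
    have hhead : a.1.2 ≠ b.1.2 := fun h ↦ hxy (congrArg Sum.inr (Subtype.ext (Prod.ext htail h)))
    have hlabel : outLabel a.1.1 a.1.2 ≠ outLabel a.1.1 b.1.2 :=
      fun h ↦ hhead (hout a.1.1 a.2 (show A a.1.1 b.1.2 from htail ▸ b.2) h)
    rw [htail] at hlabel hrow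
    rw [abs_boolSign_sub_boolSign hlabel] at hrow
    omega

theorem not_gridNear_goalCell (hn : Injective n)
    (hin : ∀ v, InjOn (inLabel v) {u | A u v}) {x y : V ⊕ Arc A} (hxy : x ≠ y) :
    ¬ GridNear (goalCell n inLabel x) (goalCell n inLabel y) := by
  rintro ⟨hcol, hrow⟩
  rcases x with u | a <;> rcases y with v | b <;> simp only [goalCell] at hcol hrow
  · exact hxy (congrArg Sum.inl (hn (by omega)))
  · omega
  · omega
  · have hhead : a.1.2 = b.1.2 := hn (by omega)
    have htail : a.1.1 ≠ b.1.1 := fun h ↦ hxy (congrArg Sum.inr (Subtype.ext (Prod.ext h hhead)))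
    have hlabel : inLabel a.1.2 a.1.1 ≠ inLabel a.1.2 b.1.1 :=
      fun h ↦ htail (hin a.1.2 a.2 (show A b.1.1 a.1.2 from hhead ▸ b.2) h)
    rw [hhead] at hlabel hrow
    rw [abs_boolSign_sub_boolSign hlabel] at hrow
    omega

theorem gridNear_goalCell_startCell_iff (hn : Injective n) (x y : V ⊕ Arc A) :
    GridNear (goalCell n inLabel x) (startCell n outLabel y) ↔ Subdiv A x y := by
  rcases x with u | a <;> rcases y with v | b <;>
    simp only [GridNear, goalCell, startCell, Subdiv, sub_zero, zero_sub, abs_neg, abs_boolSign,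
      le_refl, and_true]
  · exact iff_of_false (by omega) id
  · rw [eq_comm, ← hn.eq_iff]
    omega
  · rw [← hn.eq_iff]
    omega
  · exact iff_of_false (by omega) id

end Cells

open Metric in
theorem stmt_18_general {V : Type*} [Finite V] (A : V → V → Prop)
    (hin : ∀ v : V, {u : V | A u v}.ncard ≤ 2)
    (hout : ∀ v : V, {w : V | A v w}.ncard ≤ 2) :
    ∃ s g : (V ⊕ {a : V × V // A a.1 a.2}) → ℂ,
      (∀ x y, x ≠ y → Disjoint (closedBall (s x) 1) (closedBall (s y) 1)) ∧
      (∀ x y, x ≠ y → Disjoint (closedBall (g x) 1) (closedBall (g y) 1)) ∧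
      (∀ x y, x ≠ y →
        ((closedBall (g x) 1 ∩ closedBall (s y) 1).Nonempty ↔ Subdiv A x y)) := by
  obtain ⟨n, hn⟩ := exists_injective_nat V
  choose outLabel houtLabel using fun v ↦ exists_bool_injOn (toFinite _) (hout v)
  choose inLabel hinLabel using fun v ↦ exists_bool_injOn (toFinite _) (hin v)
  refine ⟨gridPoint ∘ startCell n outLabel, gridPoint ∘ goalCell n inLabel, ?_, ?_, ?_⟩
  · intro x y hxy
    exact (disjoint_closedBall_gridPoint_iff _ _).mpr (not_gridNear_startCell hn houtLabel hxy)
  · intro x y hxy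
    exact (disjoint_closedBall_gridPoint_iff _ _).mpr (not_gridNear_goalCell hn hinLabel hxy)
  · intro x y _
    exact (closedBall_gridPoint_inter_nonempty_iff _ _).trans
      (gridNear_goalCell_startCell_iff hn x y)

open Metric in
/-- Let `D = (V, A)` be a digraph without self-loops in which every vertex has in-degree
at most 2 and out-degree at most 2, and let `D'` be its subdivision, with vertex set
`V ⊔ A`.  Then there are start and goal positions in the plane (modeled by `ℂ`) for the
objects `V ⊔ A`, with the start discs pairwise disjoint and the goal discs pairwise
disjoint, such that the closed unit disc at `g x` intersects the closed unit disc at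
`s y` (for `x ≠ y`) exactly when `(x, y)` is an arc of `D'`; that is, `D'` is realizable
as the dependency digraph of a tabletop rearrangement instance with unit discs. -/
theorem stmt_18 {V : Type*} [Finite V] (A : V → V → Prop)
    (hirr : ∀ v, ¬ A v v)
    (hin : ∀ v : V, {u : V | A u v}.ncard ≤ 2)
    (hout : ∀ v : V, {w : V | A v w}.ncard ≤ 2) :
    ∃ s g : (V ⊕ {a : V × V // A a.1 a.2}) → ℂ,
      (∀ x y, x ≠ y → Disjoint (closedBall (s x) 1) (closedBall (s y) 1)) ∧
      (∀ x y, x ≠ y → Disjoint (closedBall (g x) 1) (closedBall (g y) 1)) ∧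
      (∀ x y, x ≠ y →
        ((closedBall (g x) 1 ∩ closedBall (s y) 1).Nonempty ↔ Subdiv A x y)) :=
  stmt_18_general A hin hout
end
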